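/- Let H = 1/4 and define, for integers n ≥ 1 and 0 ≤ k, l ≤ n−1, ⟨ε_{l/n}, δ_{k/n}⟩ = (1/(2√n))(√(k+1) − √k − √|k+1−l| + √|k−l|), which equals the covariance E[β_{l/n}(β_{(k+1)/n} − β_{k/n})] for a fractional Brownian motion β of index 1/4. Then the double sum over k, l from 0 to n−1 of |⟨ε_{l/n}, δ_{k/n}⟩| is O(n) as n → ∞. -/

import Mathlib

open Real Asymptotics Finset

/-!
For fixed `l`, the triangle inequality bounds `|⟨ε_{l/n}, δ_{k/n}⟩|` by `(2√n)⁻¹` times the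
increments of `k ↦ √k` and of `k ↦ √|k - l|`. The first is monotone and the second is
V-shaped with its minimum at `l`, so their total variations over `0, …, n` telescope to `√n`
and `√l + √(n - l) ≤ 2√n`. Hence every column sum is at most `3/2` and the double sum is at
most `3n/2`.
-/

/-- `⟨ε_{l/n}, δ_{k/n}⟩ = (1/(2√n))(√(k+1) − √k − √|k+1−l| + √|k−l|)`. -/
noncomputable def epsDeltaInner (n k l : ℕ) : ℝ :=
  (1 / (2 * Real.sqrt n)) *
    (Real.sqrt (k + 1) - Real.sqrt k
      - Real.sqrt (|(k : ℝ) + 1 - l|) + Real.sqrt (|(k : ℝ) - l|))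

section TotalVariation

variable {α : Type*} [AddCommGroup α] [LinearOrder α] [IsOrderedAddMonoid α] {f : ℕ → α} {m n : ℕ}

theorem Finset.sum_Ico_abs_sub_of_monotoneOn (hmn : m ≤ n) (hf : MonotoneOn f (Set.Icc m n)) :
    ∑ k ∈ Ico m n, |f (k + 1) - f k| = f n - f m := by
  rw [← Finset.sum_Ico_sub f hmn]
  refine Finset.sum_congr rfl fun k hk => abs_of_nonneg (sub_nonneg.2 ?_)
  obtain ⟨hmk, hkn⟩ := Finset.mem_Ico.1 hk
  exact hf ⟨hmk, hkn.le⟩ ⟨hmk.trans k.le_succ, hkn⟩ k.le_succ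

theorem Finset.sum_Ico_abs_sub_of_antitoneOn (hmn : m ≤ n) (hf : AntitoneOn f (Set.Icc m n)) :
    ∑ k ∈ Ico m n, |f (k + 1) - f k| = f m - f n := by
  convert Finset.sum_Ico_abs_sub_of_monotoneOn hmn hf.neg using 1
  · exact Finset.sum_congr rfl fun k _ => by rw [neg_sub_neg, abs_sub_comm]
  · rw [neg_sub_neg]

end TotalVariation

theorem antitoneOn_sqrt_abs_natCast_sub (l : ℕ) :
    AntitoneOn (fun k : ℕ => √(|(k : ℝ) - l|)) (Set.Iic l) := by
  intro a ha b hb hab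
  simp only [Set.mem_Iic] at ha hb
  have : (a : ℝ) ≤ b := by exact_mod_cast hab
  have : (b : ℝ) ≤ l := by exact_mod_cast hb
  apply Real.sqrt_le_sqrt
  rw [abs_of_nonpos (by linarith), abs_of_nonpos (by linarith)]
  linarith

theorem monotoneOn_sqrt_abs_natCast_sub (l : ℕ) :
    MonotoneOn (fun k : ℕ => √(|(k : ℝ) - l|)) (Set.Ici l) := by
  intro a ha b hb hab
  simp only [Set.mem_Ici] at ha hb
  have : (a : ℝ) ≤ b := by exact_mod_cast hab
  have : (l : ℝ) ≤ a := by exact_mod_cast ha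
  apply Real.sqrt_le_sqrt
  rw [abs_of_nonneg (by linarith), abs_of_nonneg (by linarith)]
  linarith

theorem sum_range_abs_sqrt_abs_sub_le {n l : ℕ} (hl : l ≤ n) :
    ∑ k ∈ range n, |√(|(k : ℝ) + 1 - l|) - √(|(k : ℝ) - l|)| ≤ 2 * √n := by
  set h := fun k : ℕ => √(|(k : ℝ) - l|)
  have hdown := Finset.sum_Ico_abs_sub_of_antitoneOn (f := h) (Nat.zero_le l)
    ((antitoneOn_sqrt_abs_natCast_sub l).mono Set.Icc_subset_Iic_self)
  have hup := Finset.sum_Ico_abs_sub_of_monotoneOn (f := h) hl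
    ((monotoneOn_sqrt_abs_natCast_sub l).mono Set.Icc_subset_Ici_self)
  have hsplit := Finset.sum_range_add_sum_Ico (fun k => |h (k + 1) - h k|) hl
  simp only [h, Nat.cast_add, Nat.cast_one, Nat.cast_zero, range_eq_Ico] at hdown hup hsplit
  rw [range_eq_Ico, ← hsplit, hdown, hup]
  have hl' : (l : ℝ) ≤ n := by exact_mod_cast hl
  simp only [zero_sub, abs_neg, Nat.abs_cast, sub_self, abs_zero, sqrt_zero, sub_zero]
  rw [abs_of_nonneg (by linarith)]
  have : √(l : ℝ) ≤ √n := by gcongr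
  have : √((n : ℝ) - l) ≤ √n := by gcongr; linarith [(l.cast_nonneg : (0:ℝ) ≤ l)]
  linarith

theorem abs_epsDeltaInner_le (n k l : ℕ) :
    |epsDeltaInner n k l| ≤
      (2 * √n)⁻¹ * ((√((k : ℝ) + 1) - √k) + |√(|(k : ℝ) + 1 - l|) - √(|(k : ℝ) - l|)|) := by
  have hmono : √(k : ℝ) ≤ √((k : ℝ) + 1) := by gcongr; linarith
  rw [epsDeltaInner, one_div, abs_mul, abs_of_nonneg (by positivity)]
  gcongr
  calc _ = |(√((k : ℝ) + 1) - √k) - (√(|(k : ℝ) + 1 - l|) - √(|(k : ℝ) - l|))| := by ring_nf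
    _ ≤ |√((k : ℝ) + 1) - √k| + |√(|(k : ℝ) + 1 - l|) - √(|(k : ℝ) - l|)| := abs_sub _ _
    _ = _ := by rw [abs_of_nonneg (sub_nonneg.2 hmono)]

theorem sum_range_abs_epsDeltaInner_le {n l : ℕ} (hl : l ≤ n) :
    ∑ k ∈ range n, |epsDeltaInner n k l| ≤ 3 / 2 := by
  have hsqrt : ∑ k ∈ range n, (√((k : ℝ) + 1) - √k) = √n := by
    simpa using Finset.sum_range_sub (fun k : ℕ => √(k : ℝ)) n
  calc ∑ k ∈ range n, |epsDeltaInner n k l|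
      ≤ ∑ k ∈ range n, (2 * √n)⁻¹ *
          ((√((k : ℝ) + 1) - √k) + |√(|(k : ℝ) + 1 - l|) - √(|(k : ℝ) - l|)|) :=
        Finset.sum_le_sum fun k _ => abs_epsDeltaInner_le n k l
    _ = (2 * √n)⁻¹ * (√n + ∑ k ∈ range n, |√(|(k : ℝ) + 1 - l|) - √(|(k : ℝ) - l|)|) := by
        rw [← Finset.mul_sum, Finset.sum_add_distrib, hsqrt]
    _ ≤ (2 * √n)⁻¹ * (3 * √n) := by
        gcongr
        linarith [sum_range_abs_sqrt_abs_sub_le hl]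
    _ = 3 / 2 * ((√n)⁻¹ * √n) := by ring
    _ ≤ 3 / 2 := mul_le_of_le_one_right (by norm_num) inv_mul_le_one

theorem sum_abs_epsDeltaInner_isBigO :
    (fun n : ℕ => ∑ k ∈ Finset.range n, ∑ l ∈ Finset.range n, |epsDeltaInner n k l|)
      =O[Filter.atTop] (fun n : ℕ => (n : ℝ)) := by
  refine isBigO_of_le' (c := 3 / 2) _ fun n => ?_
  rw [Real.norm_of_nonneg (by positivity), Real.norm_natCast, Finset.sum_comm]
  calc ∑ l ∈ range n, ∑ k ∈ range n, |epsDeltaInner n k l|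
      ≤ ∑ _l ∈ range n, (3 / 2 : ℝ) :=
        Finset.sum_le_sum fun l hl => sum_range_abs_epsDeltaInner_le (Finset.mem_range.1 hl).le
    _ = 3 / 2 * n := by simp [mul_comm]
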